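/- Let Δt>0, η>0 with ηΔt≤1, ν≥0, α₁,α₂>0, and let (N^n)_{n≥0}, (L^n)_{n≥0}, (d^n)_{n≥0} be real sequences with N^n≥0. Suppose α₁(N^n)² ≤ L^n ≤ α₂(N^n)² and (L^{n+1}−L^n)/Δt ≤ −ηL^n + ν(d^n)² for all n≥0. Then for all n≥1: N^n ≤ √(α₂/α₁)·e^{−η·nΔt/2}·N^0 + √(ν/(ηα₁))·max_{0≤s<n}|d^s|. -/
import Mathlib


open Real Finset

lemma my_sqrt_add_le (a b : ℝ) (ha : 0 ≤ a) (hb : 0 ≤ b) :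
    Real.sqrt (a + b) ≤ Real.sqrt a + Real.sqrt b := by
  nlinarith [Real.sq_sqrt ha, Real.sq_sqrt hb, Real.sq_sqrt (add_nonneg ha hb),
    Real.sqrt_nonneg a, Real.sqrt_nonneg b, Real.sqrt_nonneg (a + b),
    mul_nonneg (Real.sqrt_nonneg a) (Real.sqrt_nonneg b)]

lemma my_sqrt_exp (x : ℝ) : Real.sqrt (Real.exp x) = Real.exp (x / 2) := by
  rw [show Real.exp x = Real.exp (x / 2) ^ 2 by
    rw [sq, ← Real.exp_add]; ring_nf]
  exact Real.sqrt_sq (Real.exp_nonneg _)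

/-- Existence of a discrete ISS-Lyapunov function implies the discrete ISS
estimate. -/
theorem discrete_iss_lyapunov_implies_iss
    (Δt η ν α₁ α₂ : ℝ) (hΔt : 0 < Δt) (hη : 0 < η) (hηΔt : η * Δt ≤ 1)
    (hν : 0 ≤ ν) (hα₁ : 0 < α₁) (hα₂ : 0 < α₂)
    (N L d : ℕ → ℝ) (hN : ∀ n, 0 ≤ N n)
    (hsand : ∀ n, α₁ * (N n) ^ 2 ≤ L n ∧ L n ≤ α₂ * (N n) ^ 2)
    (hrec : ∀ n, (L (n + 1) - L n) / Δt ≤ -η * L n + ν * (d n) ^ 2) :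
    ∀ n : ℕ, ∀ hn : 1 ≤ n,
      N n ≤ Real.sqrt (α₂ / α₁) * Real.exp (-η * (n : ℝ) * Δt / 2) * N 0 +
        Real.sqrt (ν / (η * α₁)) * (Finset.range n).sup'
          (Finset.nonempty_range_iff.mpr (by omega)) (fun s => |d s|) := by
  intro n hn
  have hne : (Finset.range n).Nonempty := Finset.nonempty_range_iff.mpr (by omega)
  set D := (Finset.range n).sup' hne (fun s => |d s|) with hDdef
  have hD0 : 0 ≤ D := le_trans (abs_nonneg (d 0))
    (Finset.le_sup' (fun s => |d s|) (Finset.mem_range.mpr hn))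
  set p := 1 - η * Δt with hp
  have hp0 : 0 ≤ p := by linarith
  have hstep : ∀ m, L (m + 1) ≤ p * L m + Δt * (ν * d m ^ 2) := by
    intro m
    have h := (div_le_iff₀ hΔt).mp (hrec m)
    rw [hp]; nlinarith [h]
  have hdB : ∀ s, s < n → d s ^ 2 ≤ D ^ 2 := by
    intro s hs
    have h : |d s| ≤ D := Finset.le_sup' (fun s => |d s|) (Finset.mem_range.mpr hs)
    nlinarith [abs_nonneg (d s), sq_abs (d s)]
  have hνηD : 0 ≤ ν / η * D ^ 2 := by positivity
  have hL : ∀ m, m ≤ n → L m ≤ p ^ m * L 0 + ν / η * D ^ 2 := by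
    intro m
    induction m with
    | zero => intro _; simp; linarith
    | succ k ih =>
      intro hk
      have h2 := ih (by omega)
      have h3 := hdB k (by omega)
      have heq : p * (p ^ k * L 0 + ν / η * D ^ 2) + Δt * (ν * D ^ 2)
          = p ^ (k + 1) * L 0 + ν / η * D ^ 2 := by
        rw [hp]; field_simp; ring
      calc L (k + 1) ≤ p * L k + Δt * (ν * d k ^ 2) := hstep k
        _ ≤ p * (p ^ k * L 0 + ν / η * D ^ 2) + Δt * (ν * D ^ 2) := by
            have ha := mul_le_mul_of_nonneg_left h2 hp0
            have hb : Δt * (ν * d k ^ 2) ≤ Δt * (ν * D ^ 2) :=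
              mul_le_mul_of_nonneg_left (mul_le_mul_of_nonneg_left h3 hν) hΔt.le
            linarith
        _ = p ^ (k + 1) * L 0 + ν / η * D ^ 2 := heq
  have hLn := hL n le_rfl
  have h1 : α₁ * N n ^ 2 ≤ L n := (hsand n).1
  have h2 : L 0 ≤ α₂ * N 0 ^ 2 := (hsand 0).2
  have hpn : 0 ≤ p ^ n := pow_nonneg hp0 n
  have hNn2 : N n ^ 2 ≤ (p ^ n * (α₂ * N 0 ^ 2) + ν / η * D ^ 2) / α₁ := by
    rw [le_div_iff₀ hα₁]
    nlinarith [mul_le_mul_of_nonneg_left h2 hpn]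
  have hA : (0:ℝ) ≤ p ^ n * (α₂ * N 0 ^ 2) / α₁ := by positivity
  have hB : (0:ℝ) ≤ ν / η * D ^ 2 / α₁ := by positivity
  have hNle : N n ≤ Real.sqrt (p ^ n * (α₂ * N 0 ^ 2) / α₁ + ν / η * D ^ 2 / α₁) := by
    rw [show p ^ n * (α₂ * N 0 ^ 2) / α₁ + ν / η * D ^ 2 / α₁
        = (p ^ n * (α₂ * N 0 ^ 2) + ν / η * D ^ 2) / α₁ by ring]
    exact Real.le_sqrt_of_sq_le hNn2
  have hsplit := my_sqrt_add_le _ _ hA hB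
  -- first term
  have hterm1 : Real.sqrt (p ^ n * (α₂ * N 0 ^ 2) / α₁)
      ≤ Real.sqrt (α₂ / α₁) * Real.exp (-η * (n : ℝ) * Δt / 2) * N 0 := by
    have hrw : p ^ n * (α₂ * N 0 ^ 2) / α₁ = p ^ n * (α₂ / α₁ * N 0 ^ 2) := by ring
    rw [hrw, Real.sqrt_mul hpn, Real.sqrt_mul (by positivity : (0:ℝ) ≤ α₂ / α₁),
      Real.sqrt_sq (hN 0)]
    have hpe : p ≤ Real.exp (-(η * Δt)) := by
      have := Real.add_one_le_exp (-(η * Δt)); linarith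
    have hpne : p ^ n ≤ Real.exp (-(η * Δt)) ^ n := pow_le_pow_left₀ hp0 hpe n
    have hexp : Real.exp (-(η * Δt)) ^ n = Real.exp (-η * (n : ℝ) * Δt) := by
      rw [← Real.exp_nat_mul]; ring_nf
    have hsq : Real.sqrt (p ^ n) ≤ Real.exp (-η * (n : ℝ) * Δt / 2) := by
      calc Real.sqrt (p ^ n) ≤ Real.sqrt (Real.exp (-η * (n : ℝ) * Δt)) :=
            Real.sqrt_le_sqrt (by rw [← hexp]; exact hpne)
        _ = Real.exp (-η * (n : ℝ) * Δt / 2) := my_sqrt_exp _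
    calc Real.sqrt (p ^ n) * (Real.sqrt (α₂ / α₁) * N 0)
        ≤ Real.exp (-η * (n : ℝ) * Δt / 2) * (Real.sqrt (α₂ / α₁) * N 0) :=
          mul_le_mul_of_nonneg_right hsq (mul_nonneg (Real.sqrt_nonneg _) (hN 0))
      _ = Real.sqrt (α₂ / α₁) * Real.exp (-η * (n : ℝ) * Δt / 2) * N 0 := by ring
  have hterm2 : Real.sqrt (ν / η * D ^ 2 / α₁) = Real.sqrt (ν / (η * α₁)) * D := by
    rw [show ν / η * D ^ 2 / α₁ = ν / (η * α₁) * D ^ 2 by field_simp,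
      Real.sqrt_mul (by positivity), Real.sqrt_sq hD0]
  calc N n ≤ Real.sqrt (p ^ n * (α₂ * N 0 ^ 2) / α₁ + ν / η * D ^ 2 / α₁) := hNle
    _ ≤ Real.sqrt (p ^ n * (α₂ * N 0 ^ 2) / α₁) + Real.sqrt (ν / η * D ^ 2 / α₁) := hsplit
    _ ≤ Real.sqrt (α₂ / α₁) * Real.exp (-η * (n : ℝ) * Δt / 2) * N 0
        + Real.sqrt (ν / (η * α₁)) * D := by rw [hterm2]; linarith
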